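/- For any CRC, exactly one of the following holds: every state is output stable; or every state is not output stable; or there exists a finite set 𝒮 of output stable siphons such that a state c is output stable if and only if there exists Ω ∈ 𝒮 with c(S) = 0 for all S ∈ Ω. -/
import Mathlib


open Finset Filter Topology

/-- A chemical reaction network (CRN): a finite set of species indexed by `Fin nS`
and a finite set of reactions indexed by `Fin nR`.  Each reaction `α` is a pair
`(react α, prods α) ∈ ℕ^Λ × ℕ^Λ` of reactant/product stoichiometries with
nonzero reactant vector. -/
structure CRN where
  nS : ℕ
  nR : ℕ
  react : Fin nR → Fin nS → ℕ
  prods : Fin nR → Fin nS → ℕ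
  react_ne_zero : ∀ α, react α ≠ 0

namespace CRN

variable (N : CRN)

/-- The stoichiometry matrix: `M(S,α) = p(S) − r(S)`. -/
def stoich (s : Fin N.nS) (α : Fin N.nR) : ℝ :=
  (N.prods α s : ℝ) - (N.react α s : ℝ)

/-- A state is a vector of nonnegative concentrations. -/
def IsState (c : Fin N.nS → ℝ) : Prop := ∀ s, 0 ≤ c s

/-- `[c]`: the set of species present in `c`. -/
def present (c : Fin N.nS → ℝ) : Set (Fin N.nS) := {s | 0 < c s}

/-- A reaction `α` is applicable at `c` if `[react α] ⊆ [c]`. -/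
def applicable (c : Fin N.nS → ℝ) (α : Fin N.nR) : Prop :=
  ∀ s, 0 < N.react α s → 0 < c s

/-- `c →¹ d`: `d` is straight-line reachable from `c`, i.e. `d = c + M u` for some
nonnegative flux vector `u` whose positive entries correspond to reactions
applicable at `c`. -/
def slReach (c d : Fin N.nS → ℝ) : Prop :=
  N.IsState c ∧ N.IsState d ∧
  ∃ u : Fin N.nR → ℝ, (∀ α, 0 ≤ u α) ∧
    (∀ α, 0 < u α → N.applicable c α) ∧
    ∀ s, d s = c s + ∑ α, u α * N.stoich s α

/-- `c ⇝^l d`: `d` is `l`-segment reachable from `c`. -/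
def segReachN (l : ℕ) (c d : Fin N.nS → ℝ) : Prop :=
  ∃ b : Fin (l + 1) → Fin N.nS → ℝ,
    b 0 = c ∧ b (Fin.last l) = d ∧
    ∀ i : Fin l, N.slReach (b i.castSucc) (b i.succ)

/-- `c ⇝ d`: `d` is segment-reachable from `c`. -/
def segReach (c d : Fin N.nS → ℝ) : Prop := ∃ l, N.segReachN l c d

/-- `P(c)`: the set of species present in some state segment-reachable from `c`. -/
def producible (c : Fin N.nS → ℝ) : Set (Fin N.nS) :=
  {s | ∃ d, N.segReach c d ∧ 0 < d s}

/-- A siphon: every reaction producing a species of `Ω` has a reactant in `Ω`. -/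
def IsSiphon (Ω : Set (Fin N.nS)) : Prop :=
  ∀ α, (∃ s ∈ Ω, 0 < N.prods α s) → ∃ s ∈ Ω, 0 < N.react α s

end CRN
/-- A chemical reaction computer (CRC): a CRN together with `k` distinct input
species `X_1, …, X_k` and an output species `Y` that is not an input species. -/
structure CRC (k : ℕ) extends CRN where
  inputs : Fin k → Fin nS
  out : Fin nS
  inputs_inj : Function.Injective inputs
  out_not_input : ∀ i, inputs i ≠ out

namespace CRC

variable {k : ℕ} (C : CRC k)

/-- The initial state associated to an input vector `x ∈ (ℝ≥0)^k`:
concentration `x i` of input species `X_i` and `0` of every other species. -/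
def inputState (x : Fin k → ℝ) : Fin C.nS → ℝ :=
  fun s => ∑ i, if C.inputs i = s then x i else 0

/-- A state `o` is output stable if no segment-reachable state changes the
concentration of the output species. -/
def outputStable (o : Fin C.nS → ℝ) : Prop :=
  ∀ o', C.toCRN.segReach o o' → o' C.out = o C.out

/-- The CRC stably computes `f : (ℝ≥0)^k → ℝ≥0`. -/
def stablyComputes (f : (Fin k → ℝ) → ℝ) : Prop :=
  ∀ x : Fin k → ℝ, (∀ i, 0 ≤ x i) →
    ∀ c, C.toCRN.segReach (C.inputState x) c →
      ∃ o, C.toCRN.segReach c o ∧ C.outputStable o ∧ o C.out = f x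

end CRC


section Aux

open Filter Topology

lemma ev_pos_combo {a b : ℝ} (ha : 0 < a) : ∀ᶠ ε in 𝓝[>](0:ℝ), 0 < a + ε * b := by
  have hc : Continuous (fun ε : ℝ => a + ε * b) := by continuity
  have h : Filter.Tendsto (fun ε : ℝ => a + ε * b) (𝓝[>](0:ℝ)) (𝓝 a) := by
    simpa using (hc.tendsto 0).mono_left nhdsWithin_le_nhds
  exact h.eventually (eventually_gt_nhds ha)

lemma ev_mem_Ioi : ∀ᶠ ε in 𝓝[>](0:ℝ), 0 < ε :=
  eventually_nhdsWithin_of_forall (fun x hx => hx)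

namespace CRN

variable {N : CRN}

lemma segReach_refl (c : Fin N.nS → ℝ) : N.segReach c c :=
  ⟨0, fun _ => c, rfl, rfl, fun i => i.elim0⟩

lemma segReach_tail {c d e : Fin N.nS → ℝ} (h : N.segReach c d) (h2 : N.slReach d e) :
    N.segReach c e := by
  obtain ⟨l, b, hb0, hbl, hstep⟩ := h
  refine ⟨l + 1, Fin.snoc b e, ?_, ?_, ?_⟩
  · rw [show (0 : Fin (l + 2)) = Fin.castSucc 0 by simp, Fin.snoc_castSucc, hb0]
  · simp [Fin.snoc_last]
  · intro i
    induction i using Fin.lastCases with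
    | last =>
        rw [Fin.succ_last, Fin.snoc_castSucc, Fin.snoc_last, hbl]
        exact h2
    | cast j =>
        have h1 : (j.castSucc).succ = (j.succ).castSucc := (Fin.succ_castSucc j).symm
        rw [h1, Fin.snoc_castSucc, Fin.snoc_castSucc]
        exact hstep j

lemma rtg_of_segReach {c d : Fin N.nS → ℝ} (h : N.segReach c d) :
    Relation.ReflTransGen N.slReach c d := by
  obtain ⟨l, h⟩ := h
  induction l generalizing d with
  | zero =>
      obtain ⟨b, hb0, hbl, _⟩ := h
      have : c = d := by rw [← hb0, ← hbl]; rfl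
      exact this ▸ Relation.ReflTransGen.refl
  | succ l ih =>
      obtain ⟨b, hb0, hbl, hstep⟩ := h
      have h1 : N.segReachN l c (b (Fin.last l).castSucc) := by
        refine ⟨fun i => b i.castSucc, by simpa [Fin.castSucc_zero] using hb0, rfl, fun i => ?_⟩
        have := hstep i.castSucc
        rwa [Fin.succ_castSucc] at this
      have h2 := hstep (Fin.last l)
      have h3 : (Fin.last l).succ = Fin.last (l + 1) := Fin.succ_last l
      rw [h3, hbl] at h2
      exact (ih h1).tail h2

lemma segReach_of_rtg {c d : Fin N.nS → ℝ} (h : Relation.ReflTransGen N.slReach c d) :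
    N.segReach c d := by
  induction h with
  | refl => exact segReach_refl c
  | tail _ h2 ih => exact segReach_tail ih h2

lemma segReach_trans {c d e : Fin N.nS → ℝ} (h1 : N.segReach c d) (h2 : N.segReach d e) :
    N.segReach c e :=
  segReach_of_rtg ((rtg_of_segReach h1).trans (rtg_of_segReach h2))

lemma isState_of_segReach {c d : Fin N.nS → ℝ} (hc : N.IsState c) (h : N.segReach c d) :
    N.IsState d := by
  have h' := rtg_of_segReach h
  induction h' with
  | refl => exact hc
  | tail _ h2 _ => exact h2.2.1

end CRN

end Aux

namespace CRN

open Filter Topology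

variable {N : CRN}

lemma mimic_rtg {c d : Fin N.nS → ℝ} (hc : N.IsState c)
    (h : Relation.ReflTransGen N.slReach c d)
    {c' : Fin N.nS → ℝ} (hc' : N.IsState c') (hsup : ∀ s, 0 < c s → 0 < c' s) :
    ∀ᶠ ε in 𝓝[>](0:ℝ), N.segReach c' (fun s => c' s + ε * (d s - c s)) := by
  induction h with
  | refl =>
      filter_upwards with ε
      have : (fun s => c' s + ε * (c s - c s)) = c' := by funext s; ring
      rw [this]; exact segReach_refl c'
  | @tail d e h1 h2 ih =>
      have hd : N.IsState d := h2.1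
      have he : N.IsState e := h2.2.1
      obtain ⟨u, hu0, huapp, hsum⟩ := h2.2.2
      have hcz : ∀ s, c' s = 0 → c s = 0 := by
        intro s hs
        by_contra hne
        have : 0 < c s := lt_of_le_of_ne (hc s) (Ne.symm hne)
        exact absurd (hsup s this) (by rw [hs]; exact lt_irrefl 0)
      have E2 : ∀ᶠ ε in 𝓝[>](0:ℝ), ∀ s, 0 < d s → 0 < c' s + ε * (d s - c s) := by
        rw [Filter.eventually_all]
        intro s
        by_cases hds : 0 < d s
        · by_cases hcs : 0 < c' s
          · filter_upwards [ev_pos_combo (b := d s - c s) hcs] with ε hε _; exact hε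
          · have hc's : c' s = 0 := le_antisymm (not_lt.mp hcs) (hc' s)
            have hcs0 : c s = 0 := hcz s hc's
            filter_upwards [ev_mem_Ioi] with ε hε _
            rw [hc's, hcs0]
            have := mul_pos hε hds
            simpa using this
        · filter_upwards with ε h; exact absurd h hds
      have E3 : ∀ᶠ ε in 𝓝[>](0:ℝ), ∀ s, 0 ≤ c' s + ε * (d s - c s) := by
        rw [Filter.eventually_all]
        intro s
        by_cases hcs : 0 < c' s
        · filter_upwards [ev_pos_combo (b := d s - c s) hcs] with ε hε; exact hε.le
        · have hc's : c' s = 0 := le_antisymm (not_lt.mp hcs) (hc' s)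
          have hcs0 : c s = 0 := hcz s hc's
          filter_upwards [ev_mem_Ioi] with ε hε
          rw [hc's, hcs0]
          have := mul_nonneg hε.le (by simpa using hd s)
          simpa using this
      have E4 : ∀ᶠ ε in 𝓝[>](0:ℝ), ∀ s, 0 ≤ c' s + ε * (e s - c s) := by
        rw [Filter.eventually_all]
        intro s
        by_cases hcs : 0 < c' s
        · filter_upwards [ev_pos_combo (b := e s - c s) hcs] with ε hε; exact hε.le
        · have hc's : c' s = 0 := le_antisymm (not_lt.mp hcs) (hc' s)
          have hcs0 : c s = 0 := hcz s hc's
          filter_upwards [ev_mem_Ioi] with ε hε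
          rw [hc's, hcs0]
          have := mul_nonneg hε.le (by simpa using he s)
          simpa using this
      filter_upwards [ih, E2, E3, E4, ev_mem_Ioi] with ε hε1 hε2 hε3 hε4 hεpos
      refine segReach_tail hε1 ⟨hε3, hε4, fun α => ε * u α, ?_, ?_, ?_⟩
      · exact fun α => mul_nonneg hεpos.le (hu0 α)
      · intro α hα s hs
        have huα : 0 < u α := by
          by_contra hle
          have h0 : u α = 0 := le_antisymm (not_lt.mp hle) (hu0 α)
          simp [h0] at hα
        exact hε2 s (huapp α huα s hs)
      · intro s
        have hsum' : ∑ α, ε * u α * N.stoich s α = ε * (e s - d s) := by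
          have h1 : e s - d s = ∑ α, u α * N.stoich s α := by linarith [hsum s]
          rw [h1, Finset.mul_sum]
          exact Finset.sum_congr rfl (fun α _ => by ring)
        rw [hsum']; ring

lemma mimic' {c d : Fin N.nS → ℝ} (hc : N.IsState c) (h : N.segReach c d)
    {c' : Fin N.nS → ℝ} (hc' : N.IsState c') (hsup : ∀ s, 0 < c s → 0 < c' s) :
    ∃ e, N.segReach c' e ∧ (∀ s, 0 < c' s → 0 < e s) ∧ (∀ s, 0 < d s → 0 < e s) := by
  have hcz : ∀ s, c' s = 0 → c s = 0 := by
    intro s hs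
    by_contra hne
    have : 0 < c s := lt_of_le_of_ne (hc s) (Ne.symm hne)
    exact absurd (hsup s this) (by rw [hs]; exact lt_irrefl 0)
  have H := mimic_rtg hc (rtg_of_segReach h) hc' hsup
  have E : ∀ᶠ ε in 𝓝[>](0:ℝ), ∀ s, (0 < c' s ∨ 0 < d s) → 0 < c' s + ε * (d s - c s) := by
    rw [Filter.eventually_all]
    intro s
    by_cases hcs : 0 < c' s
    · filter_upwards [ev_pos_combo (b := d s - c s) hcs] with ε hε _; exact hε
    · have hc's : c' s = 0 := le_antisymm (not_lt.mp hcs) (hc' s)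
      have hcs0 : c s = 0 := hcz s hc's
      filter_upwards [ev_mem_Ioi] with ε hε hor
      rcases hor with h' | h'
      · exact absurd h' hcs
      · rw [hc's, hcs0]
        have := mul_pos hε h'
        simpa using this
  obtain ⟨ε, h1, h2⟩ := (H.and E).exists
  exact ⟨_, h1, fun s hs => h2 s (Or.inl hs), fun s hs => by
    by_cases hcs : 0 < c' s
    · exact h2 s (Or.inl hcs)
    · exact h2 s (Or.inr hs)⟩

end CRN

namespace CRN

open Filter Topology

variable {N : CRN}

lemma mem_producible_self {c : Fin N.nS → ℝ} {s : Fin N.nS} (hs : 0 < c s) :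
    s ∈ N.producible c :=
  ⟨c, segReach_refl c, hs⟩

lemma producible_mono {c c' : Fin N.nS → ℝ} (hc : N.IsState c) (hc' : N.IsState c')
    (hsup : ∀ s, 0 < c s → 0 < c' s) : N.producible c ⊆ N.producible c' := by
  rintro s ⟨d, hd, hds⟩
  obtain ⟨e, he, _, he2⟩ := mimic' hc hd hc' hsup
  exact ⟨e, he, he2 s hds⟩

lemma producible_subset_of_segReach {c d : Fin N.nS → ℝ} (h : N.segReach c d) :
    N.producible d ⊆ N.producible c := by
  rintro s ⟨e, he, hes⟩
  exact ⟨e, segReach_trans h he, hes⟩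

lemma exists_reach_support {c : Fin N.nS → ℝ} (hc : N.IsState c) :
    ∃ e, N.segReach c e ∧ N.IsState e ∧ ∀ s, 0 < e s ↔ s ∈ N.producible c := by
  classical
  suffices h : ∀ F : Finset (Fin N.nS), (∀ s ∈ F, s ∈ N.producible c) →
      ∃ e, N.segReach c e ∧ (∀ s, 0 < c s → 0 < e s) ∧ ∀ s ∈ F, 0 < e s by
    obtain ⟨e, he, _, hF⟩ := h (Finset.univ.filter (fun s => s ∈ N.producible c))
      (fun s hs => by simpa using hs)
    refine ⟨e, he, isState_of_segReach hc he, fun s => ⟨fun hs => ⟨e, he, hs⟩, fun hs => ?_⟩⟩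
    exact hF s (by simpa using hs)
  intro F
  induction F using Finset.induction with
  | empty => exact fun _ => ⟨c, segReach_refl c, fun _ h => h, by simp⟩
  | @insert a F hnotmem ih =>
      intro hmem
      obtain ⟨e, he, hsupe, hFe⟩ := ih (fun s hs => hmem s (Finset.mem_insert_of_mem hs))
      obtain ⟨d, hd, hds⟩ := hmem a (Finset.mem_insert_self a F)
      obtain ⟨e', he', hkeep, hgain⟩ := mimic' hc hd (isState_of_segReach hc he) hsupe
      refine ⟨e', segReach_trans he he', fun s h => hkeep s (hsupe s h), fun s hs => ?_⟩
      rcases Finset.mem_insert.mp hs with h | h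
      · rw [h]; exact hgain a hds
      · exact hkeep s (hFe s h)

lemma run_reaction {e : Fin N.nS → ℝ} (he : N.IsState e) {α : Fin N.nR}
    (happ : N.applicable e α) :
    ∀ᶠ ε in 𝓝[>](0:ℝ), N.slReach e (fun s => e s + ε * N.stoich s α) := by
  classical
  have E : ∀ᶠ ε in 𝓝[>](0:ℝ), ∀ s, 0 ≤ e s + ε * N.stoich s α := by
    rw [Filter.eventually_all]
    intro s
    by_cases hes : 0 < e s
    · filter_upwards [ev_pos_combo (b := N.stoich s α) hes] with ε hε; exact hε.le
    · have he0 : e s = 0 := le_antisymm (not_lt.mp hes) (he s)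
      have hst : 0 ≤ N.stoich s α := by
        by_contra hneg
        push_neg at hneg
        have hr : 0 < N.react α s := by
          have : (N.prods α s : ℝ) < (N.react α s : ℝ) := by
            unfold stoich at hneg; linarith
          have h2 : (0:ℝ) < (N.react α s : ℝ) := lt_of_le_of_lt (Nat.cast_nonneg _) this
          exact_mod_cast h2
        exact absurd (happ s hr) (by rw [he0]; exact lt_irrefl 0)
      filter_upwards [ev_mem_Ioi] with ε hε
      rw [he0]
      have := mul_nonneg hε.le hst
      simpa using this
  filter_upwards [E, ev_mem_Ioi] with ε hε hεpos
  refine ⟨he, hε, fun β => if β = α then ε else 0, ?_, ?_, ?_⟩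
  · intro β; dsimp only; split <;> simp [hεpos.le]
  · intro β hβ
    by_cases h : β = α
    · rw [h]; exact happ
    · simp [h] at hβ
  · intro s
    congr 1
    rw [Finset.sum_eq_single α]
    · simp
    · intro β _ hβ; simp [hβ]
    · intro h; exact absurd (Finset.mem_univ α) h

lemma isSiphon_compl_producible {c : Fin N.nS → ℝ} (hc : N.IsState c) :
    N.IsSiphon {s | s ∉ N.producible c} := by
  intro α hα
  obtain ⟨s, hsΩ, hsp⟩ := hα
  by_contra hcon
  push_neg at hcon
  have hreac : ∀ t, 0 < N.react α t → t ∈ N.producible c := by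
    intro t ht
    by_contra htn
    exact absurd ht (by simpa using hcon t htn)
  obtain ⟨e, he, heSt, hesup⟩ := exists_reach_support hc
  have happ : N.applicable e α := fun t ht => (hesup t).2 (hreac t ht)
  obtain ⟨ε, hsl, hεpos⟩ := ((run_reaction heSt happ).and ev_mem_Ioi).exists
  have hes : e s = 0 := by
    by_contra hne
    have : 0 < e s := lt_of_le_of_ne (heSt s) (Ne.symm hne)
    exact hsΩ ((hesup s).1 this)
  have hrs : N.react α s = 0 := by
    by_contra hne
    exact hsΩ (hreac s (Nat.pos_of_ne_zero hne))
  have hstoich : 0 < N.stoich s α := by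
    unfold stoich
    rw [hrs]
    simpa using hsp
  have hmem : s ∈ N.producible c := by
    refine ⟨_, segReach_tail he hsl, ?_⟩
    rw [hes]
    simpa using mul_pos hεpos hstoich
  exact hsΩ hmem

end CRN

namespace CRC

open Filter Topology CRN

variable {k : ℕ} {C : CRC k}

lemma outputStable_iff {c : Fin C.nS → ℝ} (hc : C.toCRN.IsState c) :
    C.outputStable c ↔
      ∀ α, C.toCRN.stoich C.out α ≠ 0 → ∃ s, 0 < C.toCRN.react α s ∧ s ∉ C.toCRN.producible c := by
  constructor
  · intro hst α hα
    by_contra hcon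
    push_neg at hcon
    obtain ⟨e, he, heSt, hesup⟩ := exists_reach_support hc
    have happ : C.toCRN.applicable e α := fun t ht => (hesup t).2 (hcon t ht)
    obtain ⟨ε, hsl, hεpos⟩ := ((run_reaction heSt happ).and ev_mem_Ioi).exists
    have h1 : e C.out = c C.out := hst e he
    have h2 : e C.out + ε * C.toCRN.stoich C.out α = c C.out :=
      hst _ (segReach_tail he hsl)
    have h3 : ε * C.toCRN.stoich C.out α = 0 := by linarith
    rcases mul_eq_zero.mp h3 with h | h
    · exact absurd h (ne_of_gt hεpos)
    · exact hα h
  · intro h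
    have key : ∀ o', Relation.ReflTransGen C.toCRN.slReach c o' → o' C.out = c C.out := by
      intro o' h'
      induction h' with
      | refl => rfl
      | @tail d e h1 h2 ih =>
          obtain ⟨hdSt, heSt, u, hu0, huapp, hsum⟩ := h2
          have hz : ∀ α ∈ Finset.univ, u α * C.toCRN.stoich C.out α = 0 := by
            intro α _
            by_cases hu : 0 < u α
            · by_cases hst0 : C.toCRN.stoich C.out α = 0
              · rw [hst0, mul_zero]
              · obtain ⟨s, hs1, hs2⟩ := h α hst0
                have hds : 0 < d s := huapp α hu s hs1
                exact absurd ⟨d, segReach_of_rtg h1, hds⟩ hs2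
            · have h0 : u α = 0 := le_antisymm (not_lt.mp hu) (hu0 α)
              rw [h0, zero_mul]
          have he' : e C.out = d C.out := by
            rw [hsum C.out, Finset.sum_eq_zero hz, add_zero]
          rw [he', ih]
    intro o' ho'
    exact key o' (rtg_of_segReach ho')

end CRC

namespace CRC

open Filter Topology CRN

open Classical in
/-- The indicator state of a set of species. -/
noncomputable def indSt {k : ℕ} (C : CRC k) (A : Set (Fin C.nS)) : Fin C.nS → ℝ :=
  fun s => if s ∈ A then 1 else 0

variable {k : ℕ} {C : CRC k}

lemma indSt_isState (A : Set (Fin C.nS)) : C.toCRN.IsState (C.indSt A) := by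
  intro s
  unfold indSt
  split <;> norm_num

lemma indSt_pos {A : Set (Fin C.nS)} {s : Fin C.nS} : 0 < C.indSt A s ↔ s ∈ A := by
  unfold indSt
  split <;> simp_all

lemma stable_of_zero {A : Set (Fin C.nS)} (hA : C.outputStable (C.indSt A))
    {c : Fin C.nS → ℝ} (hc : C.toCRN.IsState c)
    (hzero : ∀ s, s ∉ C.toCRN.producible (C.indSt A) → c s = 0) :
    C.outputStable c := by
  obtain ⟨e, he, heSt, hesup⟩ := exists_reach_support (indSt_isState A)
  have hsub : C.toCRN.producible c ⊆ C.toCRN.producible (C.indSt A) := by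
    refine subset_trans (producible_mono hc heSt ?_) (producible_subset_of_segReach he)
    intro s hs
    rw [hesup]
    by_contra hmem
    exact absurd (hzero s hmem) (ne_of_gt hs)
  rw [outputStable_iff hc]
  intro α hα
  obtain ⟨s, hs1, hs2⟩ := (outputStable_iff (indSt_isState A)).1 hA α hα
  exact ⟨s, hs1, fun hm => hs2 (hsub hm)⟩

end CRC


/-- For any CRC: either every state is output stable, or every state is not
output stable, or there is a finite set `𝒮` of output stable siphons such that
a state `c` is output stable if and only if `c` is zero on some `Ω ∈ 𝒮`. -/
theorem outputStable_trichotomy {k : ℕ} (C : CRC k) :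
    (∀ c : Fin C.nS → ℝ, C.toCRN.IsState c → C.outputStable c) ∨
    (∀ c : Fin C.nS → ℝ, C.toCRN.IsState c → ¬ C.outputStable c) ∨
    (∃ 𝒮 : Set (Set (Fin C.nS)), 𝒮.Finite ∧
      (∀ Ω ∈ 𝒮, C.toCRN.IsSiphon Ω ∧
        ∀ c : Fin C.nS → ℝ, C.toCRN.IsState c → (∀ s ∈ Ω, c s = 0) →
          C.outputStable c) ∧
      ∀ c : Fin C.nS → ℝ, C.toCRN.IsState c →
        (C.outputStable c ↔ ∃ Ω ∈ 𝒮, ∀ s ∈ Ω, c s = 0)) := by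
  classical
  right; right
  refine ⟨{Ω | ∃ A : Set (Fin C.nS), C.outputStable (C.indSt A) ∧
      Ω = {s | s ∉ C.toCRN.producible (C.indSt A)}}, Set.toFinite _, ?_, ?_⟩
  · rintro Ω ⟨A, hA, rfl⟩
    refine ⟨CRN.isSiphon_compl_producible (CRC.indSt_isState A), ?_⟩
    intro c hc hzero
    exact CRC.stable_of_zero hA hc (fun s hs => hzero s hs)
  · intro c hc
    constructor
    · intro hst
      set A : Set (Fin C.nS) := {s | 0 < c s} with hAdef
      have hPeq : C.toCRN.producible (C.indSt A) = C.toCRN.producible c := by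
        apply subset_antisymm
        · refine CRN.producible_mono (CRC.indSt_isState A) hc ?_
          intro s hs
          exact CRC.indSt_pos.1 hs
        · refine CRN.producible_mono hc (CRC.indSt_isState A) ?_
          intro s hs
          exact CRC.indSt_pos.2 hs
      have hA : C.outputStable (C.indSt A) := by
        rw [CRC.outputStable_iff (CRC.indSt_isState A)]
        intro α hα
        obtain ⟨s, hs1, hs2⟩ := (CRC.outputStable_iff hc).1 hst α hα
        exact ⟨s, hs1, by rw [hPeq]; exact hs2⟩
      refine ⟨_, ⟨A, hA, rfl⟩, ?_⟩
      intro s hs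
      by_contra hne
      have hpos : 0 < c s := lt_of_le_of_ne (hc s) (Ne.symm hne)
      exact hs (CRN.mem_producible_self (CRC.indSt_pos.2 hpos))
    · rintro ⟨Ω, ⟨A, hA, rfl⟩, hzero⟩
      exact CRC.stable_of_zero hA hc hzero
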